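/- Let f be a toll functional and write r_j := P(S_{n−j} = n − j)/P(S_n = n − 1), q := P(S_{n−k−m} = n − k − m + 1)/P(S_n = n − 1), a_k := E[f_k(ξ_1,…,ξ_k)], a_m := E[f_m(ξ_1,…,ξ_m)], and b := E[f_k(ξ_1,…,ξ_k)·F_m(ξ_1,…,ξ_k)]. If m ≤ k and n ≥ k + m − 1 with n admissible, then Cov(F_k(𝒯_n), F_m(𝒯_n)) = n·r_k·b − n(k + m − 1)·r_k·r_m·a_k·a_m + n(n − k − m + 1)·a_k·a_m·(q − r_k·r_m). If instead m ≤ k ≤ n ≤ k + m with n admissible, then Cov(F_k(𝒯_n), F_m(𝒯_n)) = n·r_k·b − n²·r_k·r_m·a_k·a_m. -/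

import Mathlib

open MeasureTheory ProbabilityTheory Filter Finset Topology
open scoped ENNReal NNReal

noncomputable section

namespace CGW

/-- `d` is the degree sequence (depth-first list of outdegrees) of a plane tree:
`d` is nonempty, `d₁ + ⋯ + d_j ≥ j` for `1 ≤ j < n`, and `d₁ + ⋯ + d_n = n - 1`. -/
def IsDegSeq (d : List ℕ) : Prop :=
  d ≠ [] ∧ (∀ j, 1 ≤ j → j < d.length → j ≤ (d.take j).sum) ∧ d.sum = d.length - 1

/-- A toll functional vanishes off degree sequences. -/
def IsToll (f : List ℕ → ℝ) : Prop := ∀ d, ¬ IsDegSeq d → f d = 0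

/-- The additive functional `F` induced by a toll functional `f`:
the sum of `f` over all contiguous windows `(d_i, …, d_j)`, `1 ≤ i ≤ j ≤ n`. -/
def addF (f : List ℕ → ℝ) (d : List ℕ) : ℝ :=
  ∑ i ∈ Finset.range d.length, ∑ k ∈ Finset.Icc 1 (d.length - i), f ((d.drop i).take k)

/-- Product measure: the law of `(ξ_1, …, ξ_n)` for i.i.d. `ξ_i ∼ ν`. -/
def piMeas (ν : Measure ℕ) (n : ℕ) : Measure (Fin n → ℕ) := Measure.pi fun _ => ν

/-- `P(S_n = m)`. -/
def probS (ν : Measure ℕ) (n m : ℕ) : ℝ := ((piMeas ν n) {x | ∑ i, x i = m}).toReal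

/-- `n` is admissible if `n ≥ 1` and `P(S_n = n - 1) > 0`. -/
def Admissible (ν : Measure ℕ) (n : ℕ) : Prop := 1 ≤ n ∧ 0 < probS ν n (n - 1)

/-- The filter "`n → ∞` along admissible `n`". -/
def admFilter (ν : Measure ℕ) : Filter ℕ := atTop ⊓ 𝓟 {n | Admissible ν n}

/-- `E[g(ξ_1, …, ξ_k)]`. -/
def EE (ν : Measure ℕ) (k : ℕ) (g : List ℕ → ℝ) : ℝ :=
  ∫ x : Fin k → ℕ, g (List.ofFn x) ∂(piMeas ν k)

/-- The conditional expectation `E[g(ξ_1,…,ξ_n) ∣ S_n = n - 1]`. -/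
def condE (ν : Measure ℕ) (n : ℕ) (g : (Fin n → ℕ) → ℝ) : ℝ :=
  (∫ x in {x : Fin n → ℕ | ∑ i, x i = n - 1}, g x ∂(piMeas ν n)) / probS ν n (n - 1)

/-- The conditional variance given `S_n = n - 1`. -/
def varTn (ν : Measure ℕ) (n : ℕ) (g : (Fin n → ℕ) → ℝ) : ℝ :=
  condE ν n (fun x => g x ^ 2) - (condE ν n g) ^ 2

/-- The conditional covariance given `S_n = n - 1`. -/
def covTn (ν : Measure ℕ) (n : ℕ) (g h : (Fin n → ℕ) → ℝ) : ℝ :=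
  condE ν n (fun x => g x * h x) - condE ν n g * condE ν n h

/-- The cyclic window `(x_i, x_{i+1}, …, x_{i+k-1})`, indices mod `n` (0-indexed). -/
def cycWin {n : ℕ} (x : Fin n → ℕ) (i k : ℕ) : List ℕ :=
  if h : 0 < n then (List.range k).map fun j => x ⟨(i + j) % n, Nat.mod_lt _ h⟩ else []

/-- The statistic `Σ_{k=1}^n Σ_{i=1}^n f(x_i, …, x_{i+k-1 mod n})` whose conditional law
given `S_n = n - 1` is the law of `F(𝒯_n)`. -/
def cycF (f : List ℕ → ℝ) (n : ℕ) (x : Fin n → ℕ) : ℝ :=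
  ∑ i ∈ Finset.range n, ∑ k ∈ Finset.Icc 1 n, f (cycWin x i k)

/-- `E[F(𝒯_n)]`. -/
def EFTn (ν : Measure ℕ) (f : List ℕ → ℝ) (n : ℕ) : ℝ := condE ν n (cycF f n)

/-- `Var F(𝒯_n)`. -/
def VarFTn (ν : Measure ℕ) (f : List ℕ → ℝ) (n : ℕ) : ℝ := varTn ν n (cycF f n)

/-- `E[f(𝒯_n)] = n·E[f(ξ_1,…,ξ_n)] / P(S_n = n-1)`. -/
def EfTn (ν : Measure ℕ) (f : List ℕ → ℝ) (n : ℕ) : ℝ :=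
  n * EE ν n f / probS ν n (n - 1)

/-- `E[f(𝒯_n)²] = n·E[f(ξ_1,…,ξ_n)²] / P(S_n = n-1)`. -/
def Ef2Tn (ν : Measure ℕ) (f : List ℕ → ℝ) (n : ℕ) : ℝ :=
  n * EE ν n (fun d => f d ^ 2) / probS ν n (n - 1)

/-- `μ = E[f(𝒯)] = Σ_{k ≥ 1} E[f(ξ_1,…,ξ_k)]`. -/
def muF (ν : Measure ℕ) (f : List ℕ → ℝ) : ℝ := ∑' k : ℕ, EE ν (k + 1) f

/-- `γ² = 2 Σ_{k≥1} E[f(ξ_1,…,ξ_k)(F(ξ_1,…,ξ_k) - kμ)]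
      - (Σ_{k≥1} E[f(ξ_1,…,ξ_k)²] - μ²) - μ²/σ²`. -/
def gamma2 (ν : Measure ℕ) (f : List ℕ → ℝ) (σ2 : ℝ) : ℝ :=
  2 * (∑' k : ℕ, EE ν (k + 1) fun d => f d * (addF f d - (k + 1) * muF ν f))
    - ((∑' k : ℕ, EE ν (k + 1) fun d => f d ^ 2) - (muF ν f) ^ 2)
    - (muF ν f) ^ 2 / σ2

/-- `π_T = p_{t_1} ⋯ p_{t_ℓ}` for the plane tree with degree sequence `t`. -/
def piT (ν : Measure ℕ) (t : List ℕ) : ℝ := (t.map fun j => (ν {j}).toReal).prod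

/-- The number of fringe subtrees of the tree with degree sequence `t` equal to the tree
with degree sequence `t'` (the number of windows of `t` equal to `t'`). -/
def subCount (t' t : List ℕ) : ℕ :=
  ((Finset.range (t.length + 1 - t'.length)).filter
    fun i => (t.drop i).take t'.length = t').card

/-- The cyclic window count: the statistic whose conditional law given `S_n = n - 1`
is the law of the fringe-subtree count `n_{T'}(𝒯_n)`, where `t'` is the degree sequence
of `T'`. -/
def cycCount (t' : List ℕ) (n : ℕ) (x : Fin n → ℕ) : ℕ :=
  ((Finset.range n).filter fun i => cycWin x i t'.length = t').card

/-- Asymptotic covariance matrix `γ_{T,T'}` of fringe-subtree counts. -/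
def gammaT (ν : Measure ℕ) (σ2 : ℝ) (t t' : List ℕ) : ℝ :=
  if t = t' then piT ν t - (2 * (t.length : ℝ) - 1 + σ2⁻¹) * piT ν t ^ 2
  else (subCount t' t : ℝ) * piT ν t + (subCount t t' : ℝ) * piT ν t'
    - ((t.length : ℝ) + (t'.length : ℝ) - 1 + σ2⁻¹) * piT ν t * piT ν t'

/-- `f_k(d) = f(d)·1{|d| = k}`. -/
def fk (f : List ℕ → ℝ) (k : ℕ) : List ℕ → ℝ := fun d => if d.length = k then f d else 0

/-- The statistic `Σ_{i=1}^n f_k(x_i, …, x_{i+k-1 mod n})` whose conditional law given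
`S_n = n - 1` is the law of `F_k(𝒯_n)`. -/
def cycFk (f : List ℕ → ℝ) (k n : ℕ) (x : Fin n → ℕ) : ℝ :=
  ∑ i ∈ Finset.range n, fk f k (cycWin x i k)

/-- Plane (ordered rooted) trees. -/
inductive PTree : Type where
  | node : List PTree → PTree

namespace PTree

/-- The number of nodes of a plane tree. -/
def size : PTree → ℕ
  | node ts => 1 + (ts.attach.map fun t => size t.1).sum
  decreasing_by
    have := List.sizeOf_lt_of_mem t.2
    simp only [PTree.node.sizeOf_spec]
    omega

/-- The truncation of a plane tree at height `M`. -/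
def trunc : ℕ → PTree → PTree
  | 0, _ => node []
  | M + 1, node ts => node (ts.attach.map fun t => trunc M t.1)
  decreasing_by
    have := List.sizeOf_lt_of_mem t.2
    simp only [PTree.node.sizeOf_spec]
    omega

/-- The degree sequence (depth-first list of outdegrees) of a plane tree. -/
def degSeq : PTree → List ℕ
  | node ts => ts.length :: (ts.attach.map fun t => degSeq t.1).flatten
  decreasing_by
    have := List.sizeOf_lt_of_mem t.2
    simp only [PTree.node.sizeOf_spec]
    omega

end PTree

/-- `f` is a local functional of plane trees with cut-off `M`:
`f(T)` depends only on `T` truncated at height `M`. -/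
def IsLocal (f : List ℕ → ℝ) (M : ℕ) : Prop :=
  ∀ T : PTree, f T.degSeq = f ((T.trunc M).degSeq)

/-- `f` is a weakly local functional of plane trees with cut-off `M`:
`f(T)` depends only on the pair `(|T|, T^{(M)})`. -/
def IsWeaklyLocal (f : List ℕ → ℝ) (M : ℕ) : Prop :=
  ∀ T T' : PTree, T.size = T'.size → T.trunc M = T'.trunc M → f T.degSeq = f T'.degSeq

/-- `A_k`: the sup of `|f|` over degree sequences of length `k`, as an element of `ℝ≥0∞`. -/
def Abound (f : List ℕ → ℝ) (k : ℕ) : ℝ≥0∞ :=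
  ⨆ d : {d : List ℕ // IsDegSeq d ∧ d.length = k}, ENNReal.ofReal |f d.1|

/-!
Rotating the coordinates of `(ξ_1, …, ξ_n)` preserves both the product law and the event
`S_n = n - 1`, so `E[F_k F_m; S_n = n - 1] = n · E[f_k(ξ_1, …, ξ_k) F_m; S_n = n - 1]`,
and similarly for `E[F_k; S_n = n - 1]`. A window of length `m` that overlaps the window
`(ξ_1, …, ξ_k)` without being nested in it cannot carry a degree sequence together with it, so only
nested windows (which give `F_m(ξ_1, …, ξ_k)`) and the `n - k - m + 1` disjoint ones remain.
A window carrying a degree sequence of length `j` sums to `j - 1`, so it splits off as an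
independent factor and leaves a constraint on the sum of the remaining coordinates; this produces
the probabilities `P(S_{n-k} = n - k)` and `P(S_{n-k-m} = n - k - m + 1)`.
-/

section CyclicWindow

variable {n : ℕ} (x : Fin n → ℕ)

lemma cycWin_eq_ofFn (hn : 0 < n) (i k : ℕ) :
    cycWin x i k = List.ofFn fun j : Fin k => x ⟨(i + j) % n, Nat.mod_lt _ hn⟩ := by
  rw [cycWin, dif_pos hn]
  apply List.ext_getElem <;> simp

lemma length_cycWin (hn : 0 < n) (i k : ℕ) : (cycWin x i k).length = k := by
  simp [cycWin_eq_ofFn x hn]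

lemma cycWin_zero_right (i : ℕ) : cycWin x i 0 = [] := by
  unfold cycWin; split <;> rfl

lemma cycWin_mod (hn : 0 < n) (i k : ℕ) : cycWin x (i % n) k = cycWin x i k := by
  simp only [cycWin_eq_ofFn x hn, Nat.mod_add_mod]

lemma cycWin_rotate (i : Fin n) (t k : ℕ) :
    cycWin (fun j => x (j + i)) t k = cycWin x (i + t) k := by
  have hn : 0 < n := i.pos
  simp only [cycWin_eq_ofFn _ hn]
  congr 1; funext j; congr 1
  ext
  simp only [Fin.val_add]
  rw [Nat.mod_add_mod, add_comm, ← add_assoc]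

lemma drop_cycWin (hn : 0 < n) (i k t : ℕ) :
    (cycWin x i k).drop t = cycWin x (i + t) (k - t) := by
  apply List.ext_getElem
  · simp [length_cycWin x hn]
  · intro j _ _
    simp [cycWin_eq_ofFn x hn, add_assoc]

lemma take_cycWin (hn : 0 < n) (i k m : ℕ) :
    (cycWin x i k).take m = cycWin x i (min m k) := by
  apply List.ext_getElem
  · simp [length_cycWin x hn]
  · intro j _ _
    simp [cycWin_eq_ofFn x hn]

lemma cycWin_zero_eq_ofFn_castAdd {k r : ℕ} (x : Fin (k + r) → ℕ) :
    cycWin x 0 k = List.ofFn fun i => x (Fin.castAdd r i) := by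
  rcases Nat.eq_zero_or_pos k with rfl | hk
  · simp [cycWin_zero_right]
  · rw [cycWin_eq_ofFn x (by omega)]
    congr 1; funext j; congr 1
    ext
    simp [Nat.mod_eq_of_lt (show (j : ℕ) < k + r by omega)]

lemma cycWin_add_eq_cycWin_natAdd {k r t m : ℕ} (x : Fin (k + r) → ℕ) (h : t + m ≤ r) :
    cycWin x (k + t) m = cycWin (fun i => x (Fin.natAdd k i)) t m := by
  rcases Nat.eq_zero_or_pos m with rfl | hm
  · simp [cycWin_zero_right]
  · rw [cycWin_eq_ofFn x (by omega), cycWin_eq_ofFn _ (by omega)]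
    congr 1; funext j; congr 1
    ext
    simp [Nat.mod_eq_of_lt (show t + j < r by omega),
      Nat.mod_eq_of_lt (show k + (t + j) < k + r by omega), add_assoc]

end CyclicWindow

lemma IsDegSeq.sum_add_one {d : List ℕ} (hd : IsDegSeq d) : d.sum + 1 = d.length := by
  have := List.length_pos_iff.2 hd.1
  rw [hd.2.2]; omega

lemma IsToll.isDegSeq_of_fk_ne_zero {f : List ℕ → ℝ} (hf : IsToll f) {k : ℕ} {d : List ℕ}
    (hd : fk f k d ≠ 0) : IsDegSeq d ∧ d.length = k := by
  by_cases hk : d.length = k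
  · by_contra h
    exact hd (by simp [fk, hk, hf d fun h' => h ⟨h', hk⟩])
  · simp [fk, hk] at hd

lemma IsToll.sum_add_one_of_fk_ne_zero {f : List ℕ → ℝ} (hf : IsToll f) {k : ℕ} {d : List ℕ}
    (hd : fk f k d ≠ 0) : d.sum + 1 = k := by
  obtain ⟨hdeg, rfl⟩ := hf.isDegSeq_of_fk_ne_zero hd
  exact hdeg.sum_add_one

/-- A proper suffix of a degree sequence sums to less than its length, whereas every proper prefix
of a degree sequence sums to at least its length. -/
lemma not_isDegSeq_of_drop_prefix {u v : List ℕ} (hu : IsDegSeq u) {t : ℕ} (ht : 1 ≤ t)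
    (htu : t < u.length) (hv : u.length - t < v.length) (hpre : u.drop t <+: v) :
    ¬ IsDegSeq v := by
  intro hv'
  have hvt : v.take (u.length - t) = u.drop t := by
    rw [List.prefix_iff_eq_take.1 hpre, List.length_drop]
  have h1 := hv'.2.1 (u.length - t) (by omega) hv
  have h2 := hu.2.1 t ht htu
  have h3 := List.sum_take_add_sum_drop u t
  have h4 := hu.sum_add_one
  rw [hvt] at h1
  omega

lemma fk_eq_zero_of_length_ne (f : List ℕ → ℝ) {k : ℕ} {d : List ℕ} (hd : d.length ≠ k) :
    fk f k d = 0 :=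
  if_neg hd

lemma addF_fk_eq_sum (f : List ℕ → ℝ) {m : ℕ} (hm : 1 ≤ m) (d : List ℕ) :
    addF (fk f m) d = ∑ t ∈ range d.length, fk f m ((d.drop t).take m) := by
  refine sum_congr rfl fun t ht => sum_eq_single m (fun j hj hjm => ?_) fun hmt => ?_
  · rw [mem_Icc] at hj
    exact fk_eq_zero_of_length_ne f (by simp; omega)
  · rw [mem_range] at ht; rw [mem_Icc] at hmt
    exact fk_eq_zero_of_length_ne f (by simp; omega)

section WindowProducts

variable {f : List ℕ → ℝ} {n : ℕ}

lemma not_isDegSeq_cycWin_of_overlap (x : Fin n → ℕ) (hn : 0 < n) {i k t m : ℕ}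
    (ht : 1 ≤ t) (htk : t < k) (hkm : k < t + m) (hu : IsDegSeq (cycWin x i k)) :
    ¬ IsDegSeq (cycWin x (i + t) m) := by
  refine not_isDegSeq_of_drop_prefix hu ht ?_ ?_ ?_
  · rwa [length_cycWin x hn]
  · rw [length_cycWin x hn, length_cycWin x hn]; omega
  · rw [drop_cycWin x hn, ← min_eq_left (show k - t ≤ m by omega), ← take_cycWin x hn]
    exact List.take_prefix _ _

lemma fk_mul_cycFk_eq_addF_add_sum (hf : IsToll f) {k m : ℕ} (hm : 1 ≤ m) (hmk : m ≤ k)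
    (hkn : k ≤ n) (x : Fin n → ℕ) :
    fk f k (cycWin x 0 k) * cycFk f m n x
      = fk f k (cycWin x 0 k) * addF (fk f m) (cycWin x 0 k)
        + ∑ t ∈ Icc k (n - m), fk f k (cycWin x 0 k) * fk f m (cycWin x t m) := by
  have hn : 0 < n := by omega
  by_cases hu : fk f k (cycWin x 0 k) = 0
  · simp [hu]
  obtain ⟨hu, hlen⟩ := hf.isDegSeq_of_fk_ne_zero hu
  have hfm : ∀ {t : ℕ}, ¬ IsDegSeq (cycWin x t m) → fk f m (cycWin x t m) = 0 := fun h =>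
    not_not.1 fun h' => h (hf.isDegSeq_of_fk_ne_zero h').1
  rw [cycFk, ← sum_range_add_sum_Ico (fun t => fk f m (cycWin x t m)) hkn, mul_add,
    addF_fk_eq_sum f hm, hlen, ← mul_sum]
  congr 2
  · refine sum_congr rfl fun t ht => ?_
    rw [mem_range] at ht
    rw [drop_cycWin x hn, take_cycWin x hn, zero_add]
    rcases le_or_gt (t + m) k with htm | htm
    · rw [min_eq_left (by omega)]
    · rw [fk_eq_zero_of_length_ne f (d := cycWin x t (min m (k - t)))
        (by rw [length_cycWin x hn]; omega)]
      exact hfm (zero_add t ▸ not_isDegSeq_cycWin_of_overlap x hn (by omega) ht htm hu)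
  · refine (sum_subset (fun t ht => ?_) fun t ht hnot => ?_).symm
    · simp only [mem_Icc, mem_Ico] at ht ⊢; omega
    · simp only [mem_Icc, mem_Ico, not_and, not_le] at ht hnot
      have hwrap : cycWin x (t + (n - t)) k = cycWin x 0 k := by
        rw [← cycWin_mod x hn, Nat.add_sub_cancel' ht.2.le, Nat.mod_self]
      refine hfm fun hv => ?_
      exact not_isDegSeq_cycWin_of_overlap x hn (by omega) (by omega) (by omega) hv
        (hwrap ▸ hu)

end WindowProducts

section Measure

lemma probS_zero_add_one (ν : Measure ℕ) (s : ℕ) : probS ν 0 (s + 1) = 0 := by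
  simp [probS]

variable (ν : Measure ℕ) [IsFiniteMeasure ν]

instance (n : ℕ) : IsFiniteMeasure (piMeas ν n) := by
  unfold piMeas; infer_instance

lemma integrableOn_setOf_sum_eq {n : ℕ} (φ : (Fin n → ℕ) → ℝ) (s : ℕ) :
    IntegrableOn φ {x | ∑ i, x i = s} (piMeas ν n) := by
  have hfin : {x : Fin n → ℕ | ∑ i, x i = s}.Finite := by
    convert (Finset.Nat.antidiagonalTuple n s).finite_toSet
    ext; simp [Finset.Nat.mem_antidiagonalTuple]
  rw [← Set.biUnion_of_singleton {x : Fin n → ℕ | ∑ i, x i = s}]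
  exact (integrableOn_finite_biUnion hfin).2 fun x _ => integrableOn_singleton

lemma measurePreserving_comp_perm {n : ℕ} (σ : Equiv.Perm (Fin n)) :
    MeasurePreserving (fun x : Fin n → ℕ => x ∘ σ) (piMeas ν n) (piMeas ν n) := by
  unfold piMeas
  convert measurePreserving_piCongrLeft (fun _ : Fin n => ν) σ.symm using 1
  ext x j
  simp [MeasurableEquiv.piCongrLeft, Equiv.piCongrLeft_apply_eq_cast]

lemma setIntegral_comp_perm {n : ℕ} (σ : Equiv.Perm (Fin n)) (g : (Fin n → ℕ) → ℝ) (s : ℕ) :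
    ∫ x in {x | ∑ i, x i = s}, g (x ∘ σ) ∂piMeas ν n
      = ∫ x in {x | ∑ i, x i = s}, g x ∂piMeas ν n := by
  have hemb : MeasurableEmbedding fun x : Fin n → ℕ => x ∘ σ :=
    ⟨σ.surjective.injective_comp_right, .of_discrete, fun _ _ => .of_discrete⟩
  have h := (measurePreserving_comp_perm ν σ).setIntegral_preimage_emb hemb g {x | ∑ i, x i = s}
  rwa [show (fun x : Fin n → ℕ => x ∘ σ) ⁻¹' {x | ∑ i, x i = s} = {x | ∑ i, x i = s} by
    ext x; simp [Equiv.sum_comp σ x]] at h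

lemma setIntegral_sum_rotate {n : ℕ} [NeZero n] (φ : (Fin n → ℕ) → ℝ) (s : ℕ) :
    ∫ x in {x | ∑ i, x i = s}, ∑ i : Fin n, φ (fun j => x (j + i)) ∂piMeas ν n
      = n * ∫ x in {x | ∑ i, x i = s}, φ x ∂piMeas ν n := by
  rw [integral_finsetSum _ fun i _ => integrableOn_setOf_sum_eq ν _ s]
  refine (sum_congr rfl fun i _ => setIntegral_comp_perm ν (Equiv.addRight i) φ s).trans ?_
  simp

lemma integral_castAdd_mul_natAdd {k r : ℕ} (G : (Fin k → ℕ) → ℝ) (H : (Fin r → ℕ) → ℝ) :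
    ∫ x, G (fun i => x (Fin.castAdd r i)) * H (fun i => x (Fin.natAdd k i)) ∂piMeas ν (k + r)
      = (∫ a, G a ∂piMeas ν k) * ∫ b, H b ∂piMeas ν r := by
  let e := (MeasurableEquiv.piCongrLeft (fun _ => ℕ) finSumFinEquiv).symm.trans
    (MeasurableEquiv.sumPiEquivProdPi fun _ : Fin k ⊕ Fin r => ℕ)
  have he : MeasurePreserving e (piMeas ν (k + r)) ((piMeas ν k).prod (piMeas ν r)) :=
    (measurePreserving_sumPiEquivProdPi fun _ => ν).comp
      (measurePreserving_piCongrLeft (fun _ => ν) finSumFinEquiv).symm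
  rw [← integral_prod_mul, ← he.integral_comp']
  rfl

lemma setIntegral_cycWin_mul_natAdd {k r : ℕ} (g : List ℕ → ℝ)
    (hg : ∀ d, g d ≠ 0 → d.sum + 1 = k) (H : (Fin r → ℕ) → ℝ) (s : ℕ) :
    ∫ x in {x : Fin (k + r) → ℕ | ∑ i, x i = k - 1 + s},
        g (cycWin x 0 k) * H (fun i => x (Fin.natAdd k i)) ∂piMeas ν (k + r)
      = EE ν k g * ∫ y in {y | ∑ i, y i = s}, H y ∂piMeas ν r := by
  rw [EE, ← integral_indicator .of_discrete, ← integral_indicator .of_discrete,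
    ← integral_castAdd_mul_natAdd]
  congr 1; ext x
  simp only [Set.indicator_apply, Set.mem_ofPred_eq, cycWin_zero_eq_ofFn_castAdd]
  by_cases hx : g (List.ofFn fun i => x (Fin.castAdd r i)) = 0
  · simp [hx]
  · -- where `g` does not vanish, the first `k` coordinates sum to `k - 1`
    have hsum := hg _ hx
    rw [List.sum_ofFn] at hsum
    have hiff : ∑ i, x i = k - 1 + s ↔ ∑ i, x (Fin.natAdd k i) = s := by
      rw [Fin.sum_univ_add]; omega
    simp only [hiff, mul_ite, mul_zero]

lemma setIntegral_cycWin {k r : ℕ} (g : List ℕ → ℝ) (hg : ∀ d, g d ≠ 0 → d.sum + 1 = k)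
    (s : ℕ) :
    ∫ x in {x : Fin (k + r) → ℕ | ∑ i, x i = k - 1 + s}, g (cycWin x 0 k) ∂piMeas ν (k + r)
      = EE ν k g * probS ν r s := by
  simpa [probS, measureReal_def] using setIntegral_cycWin_mul_natAdd ν g hg (fun _ => (1 : ℝ)) s

lemma setIntegral_cycWin_of_le {n k : ℕ} (g : List ℕ → ℝ) (hg : ∀ d, g d ≠ 0 → d.sum + 1 = k)
    (hk : 1 ≤ k) (hkn : k ≤ n) :
    ∫ x in {x : Fin n → ℕ | ∑ i, x i = n - 1}, g (cycWin x 0 k) ∂piMeas ν n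
      = EE ν k g * probS ν (n - k) (n - k) := by
  obtain ⟨r, rfl⟩ := Nat.exists_eq_add_of_le hkn
  rw [show k + r - 1 = k - 1 + r by omega, setIntegral_cycWin ν g hg, Nat.add_sub_cancel_left]

lemma setIntegral_cycWin_mul_cycWin {n k m t : ℕ} (g h : List ℕ → ℝ)
    (hg : ∀ d, g d ≠ 0 → d.sum + 1 = k) (hh : ∀ d, h d ≠ 0 → d.sum + 1 = m)
    (hk : 1 ≤ k) (hm : 1 ≤ m) (hkt : k ≤ t) (htm : t + m ≤ n) :
    ∫ x in {x : Fin n → ℕ | ∑ i, x i = n - 1}, g (cycWin x 0 k) * h (cycWin x t m) ∂piMeas ν n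
      = EE ν k g * EE ν m h * probS ν (n - k - m) (n - k - m + 1) := by
  obtain ⟨u, rfl⟩ := Nat.exists_eq_add_of_le hkt
  obtain ⟨r, rfl⟩ := Nat.exists_eq_add_of_le (show k ≤ n by omega)
  have hu : u < r := by omega
  have : NeZero r := ⟨by omega⟩
  have hwin (x : Fin (k + r) → ℕ) : cycWin x (k + u) m
      = cycWin ((fun j => x (Fin.natAdd k j)) ∘ Equiv.addRight (⟨u, hu⟩ : Fin r)) 0 m := by
    rw [cycWin_add_eq_cycWin_natAdd x (by omega)]
    exact (cycWin_rotate _ ⟨u, hu⟩ 0 m).symm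
  simp_rw [hwin]
  rw [show k + r - 1 = k - 1 + r by omega,
    setIntegral_cycWin_mul_natAdd ν g hg (fun y => h (cycWin (y ∘ Equiv.addRight ⟨u, hu⟩) 0 m)),
    setIntegral_comp_perm ν _ (fun y => h (cycWin y 0 m))]
  obtain ⟨r', rfl⟩ := Nat.exists_eq_add_of_le (show m ≤ r by omega)
  have hinner := setIntegral_cycWin ν h hh (r := r') (r' + 1)
  rw [show m - 1 + (r' + 1) = m + r' by omega] at hinner
  rw [hinner, show k + (m + r') - k - m = r' by omega, mul_assoc]

end Measure

section Moments

lemma cycFk_rotate (f : List ℕ → ℝ) (k : ℕ) {n : ℕ} (x : Fin n → ℕ) (i : Fin n) :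
    cycFk f k n (fun j => x (j + i)) = cycFk f k n x := by
  have hn : 0 < n := i.pos
  have : NeZero n := ⟨hn.ne'⟩
  simp only [cycFk, cycWin_rotate, ← Fin.sum_univ_eq_sum_range (fun t => fk f k (cycWin x t k))]
  rw [← Fin.sum_univ_eq_sum_range,
    ← Equiv.sum_comp (Equiv.addLeft i) fun t => fk f k (cycWin x t k)]
  refine sum_congr rfl fun t _ => ?_
  rw [Equiv.coe_addLeft, Fin.val_add, cycWin_mod x hn]

lemma cycFk_eq_sum_rotate (f : List ℕ → ℝ) (k : ℕ) {n : ℕ} (x : Fin n → ℕ) :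
    cycFk f k n x = ∑ i : Fin n, fk f k (cycWin (fun j => x (j + i)) 0 k) := by
  simp [cycFk, cycWin_rotate, ← Fin.sum_univ_eq_sum_range (fun t => fk f k (cycWin x t k))]

variable (ν : Measure ℕ) [IsFiniteMeasure ν] {f : List ℕ → ℝ}

lemma setIntegral_cycFk (hf : IsToll f) {n k : ℕ} (hk : 1 ≤ k) (hkn : k ≤ n) :
    ∫ x in {x : Fin n → ℕ | ∑ i, x i = n - 1}, cycFk f k n x ∂piMeas ν n
      = n * (EE ν k (fk f k) * probS ν (n - k) (n - k)) := by
  have : NeZero n := ⟨by omega⟩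
  simp_rw [cycFk_eq_sum_rotate f k]
  rw [setIntegral_sum_rotate ν (fun x => fk f k (cycWin x 0 k)),
    setIntegral_cycWin_of_le ν _ (fun _ => hf.sum_add_one_of_fk_ne_zero) hk hkn]

lemma setIntegral_cycFk_mul_cycFk (hf : IsToll f) {n k m : ℕ} (hm : 1 ≤ m) (hmk : m ≤ k)
    (hkn : k ≤ n) :
    ∫ x in {x : Fin n → ℕ | ∑ i, x i = n - 1}, cycFk f k n x * cycFk f m n x ∂piMeas ν n
      = n * (EE ν k (fun d => fk f k d * addF (fk f m) d) * probS ν (n - k) (n - k)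
        + #(Icc k (n - m)) *
          (EE ν k (fk f k) * EE ν m (fk f m) * probS ν (n - k - m) (n - k - m + 1))) := by
  have : NeZero n := ⟨by omega⟩
  have hfk (j : ℕ) : ∀ d, fk f j d ≠ 0 → d.sum + 1 = j := fun _ => hf.sum_add_one_of_fk_ne_zero
  have hrot (x : Fin n → ℕ) : cycFk f k n x * cycFk f m n x
      = ∑ i : Fin n,
          fk f k (cycWin (fun j => x (j + i)) 0 k) * cycFk f m n (fun j => x (j + i)) := by
    simp only [cycFk_rotate, cycFk_eq_sum_rotate f k x, sum_mul]
  simp_rw [hrot]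
  rw [setIntegral_sum_rotate ν (fun x => fk f k (cycWin x 0 k) * cycFk f m n x)]
  simp_rw [fk_mul_cycFk_eq_addF_add_sum hf hm hmk hkn]
  rw [integral_add (integrableOn_setOf_sum_eq ν _ _) (integrableOn_setOf_sum_eq ν _ _),
    integral_finsetSum _ fun _ _ => integrableOn_setOf_sum_eq ν _ _,
    setIntegral_cycWin_of_le ν _ (fun d hd => hfk k d (left_ne_zero_of_mul hd)) (by omega) hkn,
    sum_congr rfl fun t ht => setIntegral_cycWin_mul_cycWin ν _ _ (hfk k) (hfk m) (by omega) hm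
      (mem_Icc.1 ht).1 (by have := (mem_Icc.1 ht).2; omega),
    sum_const, nsmul_eq_mul]

end Moments

theorem cov_Fk_Fm_general
    (ν : Measure ℕ) [IsProbabilityMeasure ν]
    (f : List ℕ → ℝ) (hf : IsToll f)
    (n k m : ℕ) (hm : 1 ≤ m) (hmk : m ≤ k) :
    (k + m - 1 ≤ n →
      covTn ν n (cycFk f k n) (cycFk f m n)
        = n * (probS ν (n - k) (n - k) / probS ν n (n - 1))
            * EE ν k (fun d => fk f k d * addF (fk f m) d)
          - n * ((k : ℝ) + (m : ℝ) - 1)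
            * (probS ν (n - k) (n - k) / probS ν n (n - 1))
            * (probS ν (n - m) (n - m) / probS ν n (n - 1))
            * EE ν k (fk f k) * EE ν m (fk f m)
          + n * ((n : ℝ) - (k : ℝ) - (m : ℝ) + 1)
            * EE ν k (fk f k) * EE ν m (fk f m)
            * (probS ν (n - k - m) (n - k - m + 1) / probS ν n (n - 1)
              - (probS ν (n - k) (n - k) / probS ν n (n - 1))
                * (probS ν (n - m) (n - m) / probS ν n (n - 1)))) ∧
    (k ≤ n → n ≤ k + m →
      covTn ν n (cycFk f k n) (cycFk f m n)
        = n * (probS ν (n - k) (n - k) / probS ν n (n - 1))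
            * EE ν k (fun d => fk f k d * addF (fk f m) d)
          - (n : ℝ) ^ 2
            * (probS ν (n - k) (n - k) / probS ν n (n - 1))
            * (probS ν (n - m) (n - m) / probS ν n (n - 1))
            * EE ν k (fk f k) * EE ν m (fk f m)) := by
  constructor
  · intro hn
    have hkn : k ≤ n := by omega
    have hcard : (#(Icc k (n - m)) : ℝ) = n - k - m + 1 := by
      rw [Nat.card_Icc, Nat.cast_sub (by omega), Nat.cast_add, Nat.cast_sub (by omega)]
      ring
    rw [covTn, condE, condE, condE, setIntegral_cycFk_mul_cycFk ν hf hm hmk hkn, hcard,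
      setIntegral_cycFk ν hf (hm.trans hmk) hkn, setIntegral_cycFk ν hf hm (hmk.trans hkn)]
    simp only [div_eq_mul_inv]
    ring
  · intro hkn hn
    -- even for `n = k + m`, the single disjoint position contributes `P(S_0 = 1) = 0`
    rw [covTn, condE, condE, condE, setIntegral_cycFk_mul_cycFk ν hf hm hmk hkn,
      setIntegral_cycFk ν hf (hm.trans hmk) hkn, setIntegral_cycFk ν hf hm (hmk.trans hkn),
      show n - k - m = 0 by omega, probS_zero_add_one]
    simp only [div_eq_mul_inv]
    ring

/-- **Lemma 6.1.** Exact covariance formula for `Cov(F_k(𝒯_n), F_m(𝒯_n))`,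
with `r_j = P(S_{n-j} = n-j)/P(S_n = n-1)`, `q = P(S_{n-k-m} = n-k-m+1)/P(S_n = n-1)`,
`a_k = E[f_k(ξ_1,…,ξ_k)]`, `a_m = E[f_m(ξ_1,…,ξ_m)]` and
`b = E[f_k(ξ_1,…,ξ_k) F_m(ξ_1,…,ξ_k)]`. -/
theorem cov_Fk_Fm
    (ν : Measure ℕ) [IsProbabilityMeasure ν]
    (hp0 : 0 < ν {0})
    (hmom1 : Integrable (fun x : ℕ => (x : ℝ)) ν)
    (hmean : ∫ x : ℕ, (x : ℝ) ∂ν = 1)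
    (hmom2 : Integrable (fun x : ℕ => ((x : ℝ)) ^ 2) ν)
    (σ2 : ℝ) (hσ2 : σ2 = ∫ x : ℕ, ((x : ℝ) - 1) ^ 2 ∂ν) (hσ2pos : 0 < σ2)
    (f : List ℕ → ℝ) (hf : IsToll f)
    (n k m : ℕ) (hadm : Admissible ν n) (hm : 1 ≤ m) (hmk : m ≤ k) :
    (k + m - 1 ≤ n →
      covTn ν n (cycFk f k n) (cycFk f m n)
        = n * (probS ν (n - k) (n - k) / probS ν n (n - 1))
            * EE ν k (fun d => fk f k d * addF (fk f m) d)
          - n * ((k : ℝ) + (m : ℝ) - 1)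
            * (probS ν (n - k) (n - k) / probS ν n (n - 1))
            * (probS ν (n - m) (n - m) / probS ν n (n - 1))
            * EE ν k (fk f k) * EE ν m (fk f m)
          + n * ((n : ℝ) - (k : ℝ) - (m : ℝ) + 1)
            * EE ν k (fk f k) * EE ν m (fk f m)
            * (probS ν (n - k - m) (n - k - m + 1) / probS ν n (n - 1)
              - (probS ν (n - k) (n - k) / probS ν n (n - 1))
                * (probS ν (n - m) (n - m) / probS ν n (n - 1)))) ∧
    (k ≤ n → n ≤ k + m →
      covTn ν n (cycFk f k n) (cycFk f m n)
        = n * (probS ν (n - k) (n - k) / probS ν n (n - 1))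
            * EE ν k (fun d => fk f k d * addF (fk f m) d)
          - (n : ℝ) ^ 2
            * (probS ν (n - k) (n - k) / probS ν n (n - 1))
            * (probS ν (n - m) (n - m) / probS ν n (n - 1))
            * EE ν k (fk f k) * EE ν m (fk f m)) :=
  cov_Fk_Fm_general ν f hf n k m hm hmk

end CGW
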